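/- arXiv:0912.3452 — 2 statements merged into one kernel-verified Lean document; each statement's English description precedes it below -/
import Mathlib

section
/- Let H be a Hopf quasigroup and M a right H-Hopf module with action (m,h) ↦ m·h and coaction ρ, and let M^{coH} = {m ∈ M | ρ(m) = m⊗1} be the space of coinvariants. Then the linear map σ : M^{coH}⊗H → M, m⊗h ↦ m·h, is bijective, with inverse σ⁻¹ : M → M^{coH}⊗H, m ↦ m₍₀₎·Sm₍₁₎ ⊗ m₍₂₎ (which is well-defined since m₍₀₎·Sm₍₁₎ ∈ M^{coH}). Moreover σ is right H-colinear (where M^{coH}⊗H carries the coaction id⊗Δ) and intertwines the induced actions of M^{coH}⊗H (with action m⊗h·g = m⊗hg) and of M. -/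
open TensorProduct

noncomputable section

/-- The componentwise product on `H ⊗[k] H` induced by a bilinear multiplication on `H`:
`(a ⊗ b) * (c ⊗ d) = a c ⊗ b d`. -/
def tmul2 (k : Type*) [Field k] (H : Type*) [AddCommGroup H] [Module k H]
    (mul : H →ₗ[k] H →ₗ[k] H) :
    H ⊗[k] H →ₗ[k] H ⊗[k] H →ₗ[k] H ⊗[k] H :=
  TensorProduct.curry
    ((TensorProduct.map (TensorProduct.lift mul) (TensorProduct.lift mul)).comp
      (TensorProduct.tensorTensorTensorComm k H H H H).toLinearMap)

/-- The common setup: a (not necessarily associative) unital algebra `H` with a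
(not necessarily coassociative) counital coalgebra structure, such that the coproduct
and the counit are multiplicative and unital. -/
structure BialgQ (k : Type*) [Field k] (H : Type*) [AddCommGroup H] [Module k H] where
  /-- the (bilinear, not necessarily associative) multiplication -/
  mul : H →ₗ[k] H →ₗ[k] H
  /-- the unit element -/
  one : H
  /-- the (not necessarily coassociative) comultiplication -/
  comul : H →ₗ[k] H ⊗[k] H
  /-- the counit -/
  counit : H →ₗ[k] k
  one_mul : ∀ h, mul one h = h
  mul_one : ∀ h, mul h one = h
  /-- counit law `(ε ⊗ id) ∘ Δ = id` -/
  counit_comul : ∀ h,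
    TensorProduct.lid k H (TensorProduct.map counit LinearMap.id (comul h)) = h
  /-- counit law `(id ⊗ ε) ∘ Δ = id` -/
  comul_counit : ∀ h,
    TensorProduct.rid k H (TensorProduct.map LinearMap.id counit (comul h)) = h
  /-- `Δ` is multiplicative -/
  comul_mul : ∀ g h, comul (mul g h) = tmul2 k H mul (comul g) (comul h)
  /-- `Δ` is unital -/
  comul_one : comul one = one ⊗ₜ[k] one
  /-- `ε` is multiplicative -/
  counit_mul : ∀ g h, counit (mul g h) = counit g * counit h
  /-- `ε` is unital -/
  counit_one : counit one = 1

namespace BialgQ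

variable {k : Type*} [Field k] {H : Type*} [AddCommGroup H] [Module k H] (D : BialgQ k H)

/-- The multiplication as a linear map on the tensor product. -/
def mulMap : H ⊗[k] H →ₗ[k] H := TensorProduct.lift D.mul

/-- The right Galois map `β : g ⊗ h ↦ g h₍₁₎ ⊗ h₍₂₎`. -/
def rGalois : H ⊗[k] H →ₗ[k] H ⊗[k] H :=
  (TensorProduct.map D.mulMap LinearMap.id).comp
    (((TensorProduct.assoc k H H H).symm.toLinearMap).comp
      (TensorProduct.map LinearMap.id D.comul))

/-- The left Galois map `γ : g ⊗ h ↦ g₍₁₎ ⊗ g₍₂₎ h`. -/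
def lGalois : H ⊗[k] H →ₗ[k] H ⊗[k] H :=
  (TensorProduct.map LinearMap.id D.mulMap).comp
    (((TensorProduct.assoc k H H H).toLinearMap).comp
      (TensorProduct.map D.comul LinearMap.id))

/-- `φ` is almost left `H`-linear: `φ(g ⊗ h) = (g ⊗ 1) · φ(1 ⊗ h)`. -/
def AlmostLeftLinear (φ : H ⊗[k] H →ₗ[k] H ⊗[k] H) : Prop :=
  ∀ g h : H, φ (g ⊗ₜ[k] h) = tmul2 k H D.mul (g ⊗ₜ[k] D.one) (φ (D.one ⊗ₜ[k] h))

/-- `φ` is almost right `H`-linear: `φ(g ⊗ h) = φ(g ⊗ 1) · (1 ⊗ h)`. -/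
def AlmostRightLinear (φ : H ⊗[k] H →ₗ[k] H ⊗[k] H) : Prop :=
  ∀ g h : H, φ (g ⊗ₜ[k] h) = tmul2 k H D.mul (φ (g ⊗ₜ[k] D.one)) (D.one ⊗ₜ[k] h)

/-- `φ` is almost right `H`-colinear: `φ(g ⊗ h) = (id ⊗ ε)(φ(g ⊗ h₍₁₎)) ⊗ h₍₂₎`. -/
def AlmostRightColinear (φ : H ⊗[k] H →ₗ[k] H ⊗[k] H) : Prop :=
  ∀ g h : H, φ (g ⊗ₜ[k] h) =
    TensorProduct.map
      ((TensorProduct.rid k H).toLinearMap.comp (TensorProduct.map LinearMap.id D.counit))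
      LinearMap.id
      (TensorProduct.map φ LinearMap.id
        ((TensorProduct.assoc k H H H).symm (g ⊗ₜ[k] D.comul h)))

/-- `φ` is almost left `H`-colinear: `φ(g ⊗ h) = g₍₁₎ ⊗ (ε ⊗ id)(φ(g₍₂₎ ⊗ h))`. -/
def AlmostLeftColinear (φ : H ⊗[k] H →ₗ[k] H ⊗[k] H) : Prop :=
  ∀ g h : H, φ (g ⊗ₜ[k] h) =
    TensorProduct.map LinearMap.id
      ((TensorProduct.lid k H).toLinearMap.comp (TensorProduct.map D.counit LinearMap.id))
      (TensorProduct.map LinearMap.id φ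
        ((TensorProduct.assoc k H H H) (D.comul g ⊗ₜ[k] h)))

/-- The candidate inverse `g ⊗ h ↦ g S(h₍₁₎) ⊗ h₍₂₎` of the right Galois map, built
from a linear map `S : H → H`. -/
def betaInvOf (S : H →ₗ[k] H) : H ⊗[k] H →ₗ[k] H ⊗[k] H :=
  (TensorProduct.map (D.mulMap.comp (TensorProduct.map LinearMap.id S)) LinearMap.id).comp
    (((TensorProduct.assoc k H H H).symm.toLinearMap).comp
      (TensorProduct.map LinearMap.id D.comul))

/-- The candidate inverse `g ⊗ h ↦ g₍₁₎ ⊗ (S g₍₂₎) h` of the left Galois map, built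
from a linear map `S : H → H`. -/
def gammaInvOf (S : H →ₗ[k] H) : H ⊗[k] H →ₗ[k] H ⊗[k] H :=
  (TensorProduct.map LinearMap.id (D.mulMap.comp (TensorProduct.map S LinearMap.id))).comp
    (((TensorProduct.assoc k H H H).toLinearMap).comp
      (TensorProduct.map D.comul LinearMap.id))

/-- The antipode produced from an inverse `φ` of the right Galois map:
`S h = (id ⊗ ε)(φ(1 ⊗ h))`. -/
def antipodeOf (φ : H ⊗[k] H →ₗ[k] H ⊗[k] H) : H →ₗ[k] H :=
  ((TensorProduct.rid k H).toLinearMap.comp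
    ((TensorProduct.map LinearMap.id D.counit).comp
      (φ.comp (TensorProduct.mk k H H D.one))))

end BialgQ

/-- A Hopf quasigroup. -/
structure HopfQuasigroup (k : Type*) [Field k] (H : Type*) [AddCommGroup H] [Module k H]
    extends BialgQ k H where
  /-- `Δ` is coassociative -/
  coassoc : ∀ h, TensorProduct.assoc k H H H
      (TensorProduct.map comul LinearMap.id (comul h)) =
    TensorProduct.map LinearMap.id comul (comul h)
  /-- the antipode -/
  S : H →ₗ[k] H
  /-- `(S h₍₁₎)(h₍₂₎ g) = ε(h) g` -/
  antipode₁ : ∀ h g, TensorProduct.lift mul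
      (TensorProduct.map S (TensorProduct.lift mul)
        (TensorProduct.assoc k H H H (comul h ⊗ₜ[k] g))) = counit h • g
  /-- `h₍₁₎((S h₍₂₎) g) = ε(h) g` -/
  antipode₂ : ∀ h g, TensorProduct.lift mul
      (TensorProduct.map LinearMap.id
        ((TensorProduct.lift mul).comp (TensorProduct.map S LinearMap.id))
        (TensorProduct.assoc k H H H (comul h ⊗ₜ[k] g))) = counit h • g
  /-- `(g h₍₁₎) S h₍₂₎ = ε(h) g` -/
  antipode₃ : ∀ g h, TensorProduct.lift mul
      (TensorProduct.map (TensorProduct.lift mul) S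
        ((TensorProduct.assoc k H H H).symm (g ⊗ₜ[k] comul h))) = counit h • g
  /-- `(g S h₍₁₎) h₍₂₎ = ε(h) g` -/
  antipode₄ : ∀ g h, TensorProduct.lift mul
      (TensorProduct.map ((TensorProduct.lift mul).comp (TensorProduct.map LinearMap.id S))
        LinearMap.id
        ((TensorProduct.assoc k H H H).symm (g ⊗ₜ[k] comul h))) = counit h • g

/-- A Hopf coquasigroup. -/
structure HopfCoquasigroup (k : Type*) [Field k] (H : Type*) [AddCommGroup H] [Module k H]
    extends BialgQ k H where
  /-- the multiplication is associative -/
  mul_assoc : ∀ g h l, mul (mul g h) l = mul g (mul h l)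
  /-- the antipode -/
  S : H →ₗ[k] H
  /-- `(S h₍₁₎) h₍₂₎₍₁₎ ⊗ h₍₂₎₍₂₎ = 1 ⊗ h` -/
  coantipode₁ : ∀ h,
    TensorProduct.map ((TensorProduct.lift mul).comp (TensorProduct.map S LinearMap.id))
      LinearMap.id
      ((TensorProduct.assoc k H H H).symm
        (TensorProduct.map LinearMap.id comul (comul h))) = one ⊗ₜ[k] h
  /-- `h₍₁₎ S(h₍₂₎₍₁₎) ⊗ h₍₂₎₍₂₎ = 1 ⊗ h` -/
  coantipode₂ : ∀ h,
    TensorProduct.map ((TensorProduct.lift mul).comp (TensorProduct.map LinearMap.id S))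
      LinearMap.id
      ((TensorProduct.assoc k H H H).symm
        (TensorProduct.map LinearMap.id comul (comul h))) = one ⊗ₜ[k] h
  /-- `h₍₁₎₍₁₎ ⊗ h₍₁₎₍₂₎ S h₍₂₎ = h ⊗ 1` -/
  coantipode₃ : ∀ h,
    TensorProduct.map LinearMap.id
      ((TensorProduct.lift mul).comp (TensorProduct.map LinearMap.id S))
      (TensorProduct.assoc k H H H
        (TensorProduct.map comul LinearMap.id (comul h))) = h ⊗ₜ[k] one
  /-- `h₍₁₎₍₁₎ ⊗ (S h₍₁₎₍₂₎) h₍₂₎ = h ⊗ 1` -/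
  coantipode₄ : ∀ h,
    TensorProduct.map LinearMap.id
      ((TensorProduct.lift mul).comp (TensorProduct.map S LinearMap.id))
      (TensorProduct.assoc k H H H
        (TensorProduct.map comul LinearMap.id (comul h))) = h ⊗ₜ[k] one

namespace HopfQuasigroup

variable {k : Type*} [Field k] {H : Type*} [AddCommGroup H] [Module k H]
  (Q : HopfQuasigroup k H)

/-- `M` is a right `H`-Hopf module over the Hopf quasigroup `Q`, with (bilinear, unital)
action `act` and (coassociative, counital) coaction `ρ`, satisfying
`(m·h₍₁₎)·Sh₍₂₎ = ε(h) m = (m·Sh₍₁₎)·h₍₂₎` and `ρ(m·h) = m₍₀₎·h₍₁₎ ⊗ m₍₁₎h₍₂₎`. -/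
def IsHopfModule {M : Type*} [AddCommGroup M] [Module k M]
    (act : M ⊗[k] H →ₗ[k] M) (ρ : M →ₗ[k] M ⊗[k] H) : Prop :=
  (∀ m, act (m ⊗ₜ[k] Q.one) = m) ∧
  (∀ m, TensorProduct.assoc k M H H (TensorProduct.map ρ LinearMap.id (ρ m)) =
      TensorProduct.map LinearMap.id Q.comul (ρ m)) ∧
  (∀ m, TensorProduct.rid k M (TensorProduct.map LinearMap.id Q.counit (ρ m)) = m) ∧
  (∀ m h, act (TensorProduct.map act Q.S
      ((TensorProduct.assoc k M H H).symm (m ⊗ₜ[k] Q.comul h))) = Q.counit h • m) ∧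
  (∀ m h, act (TensorProduct.map (act.comp (TensorProduct.map LinearMap.id Q.S)) LinearMap.id
      ((TensorProduct.assoc k M H H).symm (m ⊗ₜ[k] Q.comul h))) = Q.counit h • m) ∧
  (∀ m h, ρ (act (m ⊗ₜ[k] h)) =
      TensorProduct.map act (TensorProduct.lift Q.mul)
        (TensorProduct.tensorTensorTensorComm k M H H H (ρ m ⊗ₜ[k] Q.comul h)))

/-- `m ↦ (m₍₀₎ · S m₍₁₎) ⊗ m₍₂₎`. -/
def coinvPart {M : Type*} [AddCommGroup M] [Module k M]
    (act : M ⊗[k] H →ₗ[k] M) (ρ : M →ₗ[k] M ⊗[k] H) : M →ₗ[k] M ⊗[k] H :=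
  (TensorProduct.map (act.comp (TensorProduct.map LinearMap.id Q.S)) LinearMap.id).comp
    ((TensorProduct.map ρ LinearMap.id).comp ρ)

/-- The induced action `m ⊳ h = (m₍₀₎ · S m₍₁₎) · (m₍₂₎ h)` of a right Hopf module. -/
def inducedAct {M : Type*} [AddCommGroup M] [Module k M]
    (act : M ⊗[k] H →ₗ[k] M) (ρ : M →ₗ[k] M ⊗[k] H) : M ⊗[k] H →ₗ[k] M :=
  act.comp ((TensorProduct.map LinearMap.id (TensorProduct.lift Q.mul)).comp
    (((TensorProduct.assoc k M H H).toLinearMap).comp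
      (TensorProduct.map (Q.coinvPart act ρ) LinearMap.id)))

/-- The free action `(m ⊗ h) · g = m ⊗ h g` on `M ⊗ H`. -/
def freeAct (M : Type*) [AddCommGroup M] [Module k M] :
    (M ⊗[k] H) ⊗[k] H →ₗ[k] M ⊗[k] H :=
  (TensorProduct.map LinearMap.id (TensorProduct.lift Q.mul)).comp
    (TensorProduct.assoc k M H H).toLinearMap

/-- The coaction `id ⊗ Δ : m ⊗ h ↦ m ⊗ h₍₁₎ ⊗ h₍₂₎` on `M ⊗ H`. -/
def freeCoact (M : Type*) [AddCommGroup M] [Module k M] :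
    M ⊗[k] H →ₗ[k] (M ⊗[k] H) ⊗[k] H :=
  ((TensorProduct.assoc k M H H).symm.toLinearMap).comp
    (TensorProduct.map LinearMap.id Q.comul)

/-- The diagonal action `(m ⊗ h) · g = m · g₍₁₎ ⊗ h g₍₂₎` on `M ⊗ H`. -/
def diagAct {M : Type*} [AddCommGroup M] [Module k M]
    (act : M ⊗[k] H →ₗ[k] M) : (M ⊗[k] H) ⊗[k] H →ₗ[k] M ⊗[k] H :=
  (TensorProduct.map act (TensorProduct.lift Q.mul)).comp
    (((TensorProduct.tensorTensorTensorComm k M H H H).toLinearMap).comp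
      (TensorProduct.map LinearMap.id Q.comul))

/-- The coinvariants `M^{coH} = {m | ρ(m) = m ⊗ 1}` of a right `H`-comodule. -/
def coinvariants {M : Type*} [AddCommGroup M] [Module k M]
    (ρ : M →ₗ[k] M ⊗[k] H) : Submodule k M :=
  LinearMap.ker (ρ - (TensorProduct.mk k M H).flip Q.one)

end HopfQuasigroup

namespace HopfCoquasigroup

variable {k : Type*} [Field k] {H : Type*} [AddCommGroup H] [Module k H]
  (Q : HopfCoquasigroup k H)

/-- `M` is a right `H`-Hopf module over the Hopf coquasigroup `Q`, with (bilinear,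
associative, unital) action `act` and (counital, not necessarily coassociative)
coaction `ρ`, satisfying `m₍₀₎₍₀₎ ⊗ m₍₀₎₍₁₎ S m₍₁₎ = m ⊗ 1 = m₍₀₎₍₀₎ ⊗ (S m₍₀₎₍₁₎) m₍₁₎`
and `ρ(m·h) = m₍₀₎·h₍₁₎ ⊗ m₍₁₎h₍₂₎`. -/
def IsHopfModule {M : Type*} [AddCommGroup M] [Module k M]
    (act : M ⊗[k] H →ₗ[k] M) (ρ : M →ₗ[k] M ⊗[k] H) : Prop :=
  (∀ m, act (m ⊗ₜ[k] Q.one) = m) ∧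
  (∀ m g h, act (act (m ⊗ₜ[k] g) ⊗ₜ[k] h) = act (m ⊗ₜ[k] Q.mul g h)) ∧
  (∀ m, TensorProduct.rid k M (TensorProduct.map LinearMap.id Q.counit (ρ m)) = m) ∧
  (∀ m, TensorProduct.map LinearMap.id
      ((TensorProduct.lift Q.mul).comp (TensorProduct.map LinearMap.id Q.S))
      (TensorProduct.assoc k M H H (TensorProduct.map ρ LinearMap.id (ρ m)))
      = m ⊗ₜ[k] Q.one) ∧
  (∀ m, TensorProduct.map LinearMap.id
      ((TensorProduct.lift Q.mul).comp (TensorProduct.map Q.S LinearMap.id))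
      (TensorProduct.assoc k M H H (TensorProduct.map ρ LinearMap.id (ρ m)))
      = m ⊗ₜ[k] Q.one) ∧
  (∀ m h, ρ (act (m ⊗ₜ[k] h)) =
      TensorProduct.map act (TensorProduct.lift Q.mul)
        (TensorProduct.tensorTensorTensorComm k M H H H (ρ m ⊗ₜ[k] Q.comul h)))

/-- The induced coaction `λ(m) = ((m₍₀₎₍₀₎ · S m₍₀₎₍₁₎) · m₍₁₎₍₁₎) ⊗ m₍₁₎₍₂₎`. -/
def inducedCoact {M : Type*} [AddCommGroup M] [Module k M]
    (act : M ⊗[k] H →ₗ[k] M) (ρ : M →ₗ[k] M ⊗[k] H) : M →ₗ[k] M ⊗[k] H :=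
  (TensorProduct.map act LinearMap.id).comp
    (((TensorProduct.assoc k M H H).symm.toLinearMap).comp
      ((TensorProduct.map (act.comp (TensorProduct.map LinearMap.id Q.S)) LinearMap.id).comp
        ((TensorProduct.map ρ Q.comul).comp ρ)))

end HopfCoquasigroup

/-- The map `σ : M^{coH} ⊗ H → M`, `m ⊗ h ↦ m · h`. -/
def sigmaMap {k : Type*} [Field k] {H : Type*} [AddCommGroup H] [Module k H]
    (Q : HopfQuasigroup k H) {M : Type*} [AddCommGroup M] [Module k M]
    (act : M ⊗[k] H →ₗ[k] M) (ρ : M →ₗ[k] M ⊗[k] H) :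
    (↥(Q.coinvariants ρ) ⊗[k] H) →ₗ[k] M :=
  act.comp (TensorProduct.map (Q.coinvariants ρ).subtype LinearMap.id)


/-!
The antipode of a Hopf quasigroup is anticomultiplicative (Klim–Majid): the element
`(Δ(S h₍₁₎) · Δ h₍₂₎) · (S h₍₄₎ ⊗ S h₍₃₎)` of `H ⊗ H` equals `Δ(S h)` by cancelling the
middle legs with `(g b₍₁₎) S b₍₂₎ = ε(b) g` in each factor, and equals `S h₍₂₎ ⊗ S h₍₁₎` because
`Δ(S h₍₁₎) · Δ h₍₂₎ = Δ((S h₍₁₎) h₍₂₎) = ε(h) 1 ⊗ 1`. Consequently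
`ρ(m₍₀₎ · S m₍₁₎) = m₍₀₎ · S m₍₃₎ ⊗ m₍₁₎ S m₍₂₎ = m₍₀₎ · S m₍₁₎ ⊗ 1`.

For a coinvariant `c` the Hopf module axiom reads `ρ(c · h) = c · h₍₁₎ ⊗ h₍₂₎`, which is the
colinearity of `σ`, and `(c · h₍₁₎) · S h₍₂₎ = ε(h) c` turns it into `σ⁻¹(c · h) = c ⊗ h`; the
other composite is `(m₍₀₎ · S m₍₁₎) · m₍₂₎ = m`. The same computation gives
`(c · g) ⊳ h = c · (g h)` in `M` and in the free module `M^{coH} ⊗ H`, so `σ` intertwines the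
induced actions.
-/

open LinearMap

@[simp]
lemma tmul2_tmul_tmul {k : Type*} [Field k] {H : Type*} [AddCommGroup H] [Module k H]
    (mul : H →ₗ[k] H →ₗ[k] H) (a b c d : H) :
    tmul2 k H mul (a ⊗ₜ b) (c ⊗ₜ d) = mul a c ⊗ₜ mul b d := by
  simp [tmul2]

namespace HopfQuasigroup

variable {k : Type*} [Field k] {H : Type*} [AddCommGroup H] [Module k H]
  (Q : HopfQuasigroup k H)

lemma rTensor_counit_comul (h : H) : map Q.counit id (Q.comul h) = (1 : k) ⊗ₜ h := by
  rw [← (TensorProduct.lid k H).injective.eq_iff, Q.counit_comul]; simp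

lemma map_comul_eq_tmul {V : Type*} [AddCommGroup V] [Module k V] (f : H →ₗ[k] V) (v : V)
    (hf : ∀ h, f h = Q.counit h • v) (h : H) : map f id (Q.comul h) = v ⊗ₜ h := by
  have hf' : f = toSpanSingleton k V v ∘ₗ Q.counit := LinearMap.ext hf
  simpa [hf', map_map] using congrArg (map (toSpanSingleton k V v) id) (Q.rTensor_counit_comul h)

lemma mul_mul_antipode_comul (g h : H) :
    lift Q.mul (map (Q.mul g) Q.S (Q.comul h)) = Q.counit h • g := by
  rw [← Q.antipode₃ g h]
  induction Q.comul h using TensorProduct.induction_on with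
  | zero => simp
  | tmul a b => simp
  | add x y hx hy => simp [tmul_add, hx, hy]

lemma mul_antipode_lTensor_comul (h : H) :
    lift Q.mul (map id Q.S (Q.comul h)) = Q.counit h • Q.one := by
  have : Q.mul Q.one = LinearMap.id := LinearMap.ext fun h => Q.one_mul h
  rw [← Q.mul_mul_antipode_comul, this]

lemma mul_antipode_rTensor_comul (h : H) :
    lift Q.mul (map Q.S id (Q.comul h)) = Q.counit h • Q.one := by
  rw [← Q.antipode₄ Q.one h]
  induction Q.comul h using TensorProduct.induction_on with
  | zero => simp
  | tmul a b => simp [Q.one_mul]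
  | add x y hx hy => simp [tmul_add, hx, hy]

section Comodule

variable {M : Type*} [AddCommGroup M] [Module k M] {ρ : M →ₗ[k] M ⊗[k] H}

/-- In Sweedler notation, `f(m₍₀₎ ⊗ m₍₃₎) ⊗ g(m₍₁₎ ⊗ m₍₂₎) = f(m₍₀₎ ⊗ m₍₁₎) ⊗ w`: by
coassociativity the two middle legs form a coproduct, which `g` cancels. -/
lemma apply_map_coaction_comul_of_collapse
    (hρ : ∀ m, TensorProduct.assoc k M H H (map ρ id (ρ m)) = map id Q.comul (ρ m))
    {V W : Type*} [AddCommGroup V] [Module k V] [AddCommGroup W] [Module k W]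
    (f : M ⊗[k] H →ₗ[k] V) (g : H ⊗[k] H →ₗ[k] W) (w : W)
    (hg : ∀ h, g (Q.comul h) = Q.counit h • w)
    (Ψ : (M ⊗[k] H) ⊗[k] (H ⊗[k] H) →ₗ[k] V ⊗[k] W)
    (hΨ : ∀ n a b c, Ψ ((n ⊗ₜ a) ⊗ₜ (b ⊗ₜ c)) = f (n ⊗ₜ c) ⊗ₜ g (a ⊗ₜ b)) (m : M) :
    Ψ (map ρ Q.comul (ρ m)) = f (ρ m) ⊗ₜ w := by
  have inner : ∀ n c (v : H ⊗[k] H),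
      Ψ ((TensorProduct.assoc k M H (H ⊗[k] H)).symm
        (n ⊗ₜ TensorProduct.assoc k H H H (v ⊗ₜ c))) = f (n ⊗ₜ c) ⊗ₜ g v := by
    intro n c v
    induction v using TensorProduct.induction_on with
    | zero => simp
    | tmul a b => simp [hΨ]
    | add x y hx hy => simp [add_tmul, tmul_add, hx, hy]
  have middle : ∀ n (u : H ⊗[k] H),
      Ψ ((TensorProduct.assoc k M H (H ⊗[k] H)).symm
        (n ⊗ₜ TensorProduct.assoc k H H H (rTensor H Q.comul u))) =
        f (n ⊗ₜ TensorProduct.lid k H (map Q.counit id u)) ⊗ₜ w := by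
    intro n u
    induction u using TensorProduct.induction_on with
    | zero => simp
    | tmul p c => simp [inner, hg, smul_tmul, tmul_smul]
    | add x y hx hy => simp [tmul_add, add_tmul, hx, hy]
  have naturality : ∀ n (u : H ⊗[k] H),
      lTensor (M ⊗[k] H) Q.comul ((TensorProduct.assoc k M H H).symm (n ⊗ₜ u)) =
        (TensorProduct.assoc k M H (H ⊗[k] H)).symm (n ⊗ₜ lTensor H Q.comul u) := by
    intro n u
    induction u using TensorProduct.induction_on with
    | zero => simp
    | tmul a b => simp
    | add x y hx hy => simp [tmul_add, hx, hy]
  have outer : ∀ t : M ⊗[k] H,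
      Ψ (lTensor (M ⊗[k] H) Q.comul
        ((TensorProduct.assoc k M H H).symm (lTensor M Q.comul t))) = f t ⊗ₜ w := by
    intro t
    induction t using TensorProduct.induction_on with
    | zero => simp
    | tmul n x =>
      rw [lTensor_tmul, naturality, lTensor, ← Q.coassoc x, ← rTensor, middle, Q.counit_comul]
    | add x y hx hy => simp [add_tmul, hx, hy]
  have hρ' : rTensor H ρ (ρ m) =
      (TensorProduct.assoc k M H H).symm (lTensor M Q.comul (ρ m)) :=
    (LinearEquiv.eq_symm_apply _).2 (hρ m)
  rw [← outer, ← hρ', ← comp_apply (lTensor _ _), lTensor_comp_rTensor]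

end Comodule

lemma tmul2_one_one (z : H ⊗[k] H) : tmul2 k H Q.mul (Q.one ⊗ₜ Q.one) z = z := by
  induction z using TensorProduct.induction_on with
  | zero => simp
  | tmul a b => simp [Q.one_mul]
  | add x y hx hy => simp [hx, hy]

def antipodeFlip : H ⊗[k] H →ₗ[k] H ⊗[k] H :=
  map Q.S Q.S ∘ₗ (TensorProduct.comm k H H).toLinearMap

@[simp]
lemma antipodeFlip_tmul (a b : H) : Q.antipodeFlip (a ⊗ₜ b) = Q.S b ⊗ₜ Q.S a := rfl

/-- In Sweedler notation: `(Y · (b₍₁₎ ⊗ b₍₂₎)) · (S b₍₄₎ ⊗ S b₍₃₎) = ε(b) Y` in `H ⊗ H`. -/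
lemma tmul2_comul_antipodeFlip_comul (Y : H ⊗[k] H) (b : H) :
    lift (tmul2 k H Q.mul)
      (map (tmul2 k H Q.mul Y ∘ₗ Q.comul) (Q.antipodeFlip ∘ₗ Q.comul) (Q.comul b)) =
      Q.counit b • Y := by
  induction Y using TensorProduct.induction_on with
  | zero => simp
  | tmul y y' =>
    rw [map_comp, comp_apply, ← comp_apply (lift _),
      Q.apply_map_coaction_comul_of_collapse Q.coassoc
        (lift Q.mul ∘ₗ map (Q.mul y) Q.S) (lift Q.mul ∘ₗ map (Q.mul y') Q.S) y'
        (Q.mul_mul_antipode_comul y') _ (fun n a b c => by simp)]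
    simp [mul_mul_antipode_comul, smul_tmul]
  | add x y hx hy =>
    rw [map_add, add_comp, map_add_left, LinearMap.add_apply, map_add, hx, hy, smul_add]

theorem comul_antipode (h : H) : Q.comul (Q.S h) = Q.antipodeFlip (Q.comul h) := by
  -- `G (a ⊗ b ⊗ c) = (Δ(S a) · Δ b) · (S c₍₂₎ ⊗ S c₍₁₎)`
  let G : H ⊗[k] (H ⊗[k] H) →ₗ[k] H ⊗[k] H :=
    lift (tmul2 k H Q.mul) ∘ₗ
      map (lift (tmul2 k H Q.mul) ∘ₗ map (Q.comul ∘ₗ Q.S) Q.comul) (Q.antipodeFlip ∘ₗ Q.comul) ∘ₗ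
      (TensorProduct.assoc k H H H).symm.toLinearMap
  have cancel_right : ∀ t : H ⊗[k] H,
      G (lTensor H Q.comul t) = Q.comul (Q.S (TensorProduct.rid k H (map id Q.counit t))) := by
    intro t
    induction t using TensorProduct.induction_on with
    | zero => simp
    | tmul a b =>
      have hG : ∀ u : H ⊗[k] H, G (a ⊗ₜ u) = lift (tmul2 k H Q.mul)
          (map (tmul2 k H Q.mul (Q.comul (Q.S a)) ∘ₗ Q.comul) (Q.antipodeFlip ∘ₗ Q.comul) u) := by
        intro u
        induction u using TensorProduct.induction_on with
        | zero => simp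
        | tmul b c => simp [G]
        | add x y hx hy => simp [tmul_add, hx, hy]
      rw [lTensor_tmul, hG, tmul2_comul_antipodeFlip_comul]
      simp
    | add x y hx hy => simp [hx, hy]
  have cancel_left : ∀ t : H ⊗[k] H,
      G (TensorProduct.assoc k H H H (rTensor H Q.comul t)) =
        Q.antipodeFlip (Q.comul (TensorProduct.lid k H (map Q.counit id t))) := by
    intro t
    induction t using TensorProduct.induction_on with
    | zero => simp
    | tmul a c =>
      have hG : ∀ v : H ⊗[k] H, G (TensorProduct.assoc k H H H (v ⊗ₜ c)) =
          tmul2 k H Q.mul (Q.comul (lift Q.mul (map Q.S id v))) (Q.antipodeFlip (Q.comul c)) := by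
        intro v
        induction v using TensorProduct.induction_on with
        | zero => simp
        | tmul a b => simp [G, Q.comul_mul]
        | add x y hx hy => simp [add_tmul, hx, hy]
      rw [rTensor_tmul, hG, mul_antipode_rTensor_comul]
      simp [Q.comul_one, tmul2_one_one]
    | add x y hx hy => simp [hx, hy]
  calc Q.comul (Q.S h) = G (lTensor H Q.comul (Q.comul h)) := by
        rw [cancel_right, Q.comul_counit]
    _ = G (TensorProduct.assoc k H H H (rTensor H Q.comul (Q.comul h))) :=
        congrArg G (Q.coassoc h).symm
    _ = Q.antipodeFlip (Q.comul h) := by rw [cancel_left, Q.counit_comul]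

lemma mem_coinvariants_iff {M : Type*} [AddCommGroup M] [Module k M] {ρ : M →ₗ[k] M ⊗[k] H}
    {m : M} : m ∈ Q.coinvariants ρ ↔ ρ m = m ⊗ₜ Q.one := by
  rw [coinvariants, mem_ker, LinearMap.sub_apply, sub_eq_zero, flip_apply, mk_apply]

lemma freeCoact_tmul (N : Type*) [AddCommGroup N] [Module k N] (n : N) (g : H) :
    Q.freeCoact N (n ⊗ₜ g) = map (TensorProduct.mk k N H n) id (Q.comul g) := by
  have assoc_symm : ∀ t : H ⊗[k] H,
      (TensorProduct.assoc k N H H).symm (n ⊗ₜ t) = map (TensorProduct.mk k N H n) id t := by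
    intro t
    induction t using TensorProduct.induction_on with
    | zero => simp
    | tmul a b => simp
    | add x y hx hy => simp [tmul_add, hx, hy]
  simp [freeCoact, assoc_symm]

section HopfModule

variable {M : Type*} [AddCommGroup M] [Module k M]
  {act : M ⊗[k] H →ₗ[k] M} {ρ : M →ₗ[k] M ⊗[k] H}

def coinvProjection (act : M ⊗[k] H →ₗ[k] M) (ρ : M →ₗ[k] M ⊗[k] H) : M →ₗ[k] M :=
  act ∘ₗ lTensor M Q.S ∘ₗ ρ

lemma coinvPart_apply (m : M) : Q.coinvPart act ρ m = map (Q.coinvProjection act ρ) id (ρ m) := by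
  rw [coinvPart, comp_apply, comp_apply, map_map, comp_id]
  rfl

namespace IsHopfModule

variable {Q}
variable (hM : Q.IsHopfModule act ρ)
include hM

lemma coassoc (m : M) :
    TensorProduct.assoc k M H H (map ρ id (ρ m)) = map id Q.comul (ρ m) := hM.2.1 m

lemma counit (m : M) : TensorProduct.rid k M (map id Q.counit (ρ m)) = m := hM.2.2.1 m

lemma act_act_antipode (m : M) (h : H) :
    act (map act Q.S ((TensorProduct.assoc k M H H).symm (m ⊗ₜ Q.comul h))) = Q.counit h • m :=
  hM.2.2.2.1 m h

lemma act_antipode_act (m : M) (h : H) :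
    act (map (act ∘ₗ map id Q.S) id ((TensorProduct.assoc k M H H).symm (m ⊗ₜ Q.comul h))) =
      Q.counit h • m :=
  hM.2.2.2.2.1 m h

lemma coaction_act (y : M ⊗[k] H) :
    ρ (act y) = map act (lift Q.mul) (tensorTensorTensorComm k M H H H (map ρ Q.comul y)) := by
  induction y using TensorProduct.induction_on with
  | zero => simp
  | tmul m h => simpa using hM.2.2.2.2.2 m h
  | add x y hx hy => simp [hx, hy]

end IsHopfModule

variable (hM : Q.IsHopfModule act ρ)
include hM

lemma coaction_coinvProjection (m : M) :
    ρ (Q.coinvProjection act ρ m) = Q.coinvProjection act ρ m ⊗ₜ Q.one := by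
  have hS : Q.comul ∘ₗ Q.S = Q.antipodeFlip ∘ₗ Q.comul := LinearMap.ext Q.comul_antipode
  calc ρ (Q.coinvProjection act ρ m)
      = map act (lift Q.mul) (tensorTensorTensorComm k M H H H
          (map ρ (Q.comul ∘ₗ Q.S) (ρ m))) := by
        simp [coinvProjection, hM.coaction_act]
    _ = (map act (lift Q.mul) ∘ₗ (tensorTensorTensorComm k M H H H).toLinearMap ∘ₗ
          lTensor (M ⊗[k] H) Q.antipodeFlip) (map ρ Q.comul (ρ m)) := by
        simp [hS]
    _ = Q.coinvProjection act ρ m ⊗ₜ Q.one :=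
        Q.apply_map_coaction_comul_of_collapse hM.coassoc (act ∘ₗ lTensor M Q.S)
          (lift Q.mul ∘ₗ lTensor H Q.S) Q.one Q.mul_antipode_lTensor_comul _
          (fun n a b c => by simp) m

lemma coinvProjection_mem (m : M) : Q.coinvProjection act ρ m ∈ Q.coinvariants ρ :=
  Q.mem_coinvariants_iff.2 (Q.coaction_coinvProjection hM m)

lemma act_coinvPart (m : M) : act (Q.coinvPart act ρ m) = m := by
  have collapse : ∀ t : M ⊗[k] H,
      act (map (act ∘ₗ map id Q.S) id ((TensorProduct.assoc k M H H).symm (lTensor M Q.comul t)))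
        = TensorProduct.rid k M (map id Q.counit t) := by
    intro t
    induction t using TensorProduct.induction_on with
    | zero => simp
    | tmul n h => simpa using hM.act_antipode_act n h
    | add x y hx hy => simp [hx, hy]
  have hρ : map ρ id (ρ m) = (TensorProduct.assoc k M H H).symm (lTensor M Q.comul (ρ m)) :=
    (LinearEquiv.eq_symm_apply _).2 (hM.coassoc m)
  rw [coinvPart, comp_apply, comp_apply, hρ, collapse, hM.counit]

variable {c : M} (hc : c ∈ Q.coinvariants ρ)
include hc

lemma coaction_act_of_mem (h : H) :
    ρ (act (c ⊗ₜ h)) = map (act ∘ₗ TensorProduct.mk k M H c) id (Q.comul h) := by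
  rw [hM.coaction_act, map_tmul, Q.mem_coinvariants_iff.1 hc]
  induction Q.comul h using TensorProduct.induction_on with
  | zero => simp
  | tmul a b => simp [Q.one_mul]
  | add x y hx hy => simp [tmul_add, hx, hy]

lemma coinvProjection_act_of_mem (h : H) :
    Q.coinvProjection act ρ (act (c ⊗ₜ h)) = Q.counit h • c := by
  rw [← hM.act_act_antipode, coinvProjection, comp_apply, comp_apply,
    Q.coaction_act_of_mem hM hc]
  induction Q.comul h using TensorProduct.induction_on with
  | zero => simp
  | tmul a b => simp
  | add x y hx hy => simp only [map_add, tmul_add, hx, hy]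

lemma map_coaction_act_of_mem {V : Type*} [AddCommGroup V] [Module k V] (f : M →ₗ[k] V)
    (v : V) (hf : ∀ h, f (act (c ⊗ₜ h)) = Q.counit h • v) (g : H) :
    map f id (ρ (act (c ⊗ₜ g))) = v ⊗ₜ g := by
  rw [Q.coaction_act_of_mem hM hc, map_map, comp_id]
  exact Q.map_comul_eq_tmul _ v hf g

lemma coinvPart_act_of_mem (g : H) : Q.coinvPart act ρ (act (c ⊗ₜ g)) = c ⊗ₜ g := by
  rw [coinvPart_apply]
  exact Q.map_coaction_act_of_mem hM hc _ c (Q.coinvProjection_act_of_mem hM hc) g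

lemma inducedAct_act_of_mem (g h : H) :
    Q.inducedAct act ρ (act (c ⊗ₜ g) ⊗ₜ h) = act (c ⊗ₜ Q.mul g h) := by
  simp [inducedAct, Q.coinvPart_act_of_mem hM hc]

end HopfModule

lemma inducedAct_freeAct_freeCoact (N : Type*) [AddCommGroup N] [Module k N] (n : N)
    (g h : H) :
    Q.inducedAct (Q.freeAct N) (Q.freeCoact N) ((n ⊗ₜ g) ⊗ₜ h) = n ⊗ₜ Q.mul g h := by
  have hP : ∀ a, Q.coinvProjection (Q.freeAct N) (Q.freeCoact N) (n ⊗ₜ a) =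
      Q.counit a • (n ⊗ₜ Q.one) := by
    intro a
    rw [coinvProjection, comp_apply, comp_apply, freeCoact_tmul, ← tmul_smul,
      ← Q.mul_antipode_lTensor_comul]
    induction Q.comul a using TensorProduct.induction_on with
    | zero => simp
    | tmul a b => simp [freeAct]
    | add x y hx hy => simp only [map_add, tmul_add, hx, hy]
  have hpart : Q.coinvPart (Q.freeAct N) (Q.freeCoact N) (n ⊗ₜ g) = (n ⊗ₜ Q.one) ⊗ₜ g := by
    rw [coinvPart_apply, freeCoact_tmul, map_map, comp_id]
    exact Q.map_comul_eq_tmul _ _ hP g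
  rw [inducedAct, comp_apply, comp_apply, comp_apply, map_tmul, hpart]
  simp [freeAct, Q.one_mul]

end HopfQuasigroup

section Sigma

variable {k : Type*} [Field k] {H : Type*} [AddCommGroup H] [Module k H]
  {Q : HopfQuasigroup k H} {M : Type*} [AddCommGroup M] [Module k M]
  {act : M ⊗[k] H →ₗ[k] M} {ρ : M →ₗ[k] M ⊗[k] H}

@[simp]
lemma sigmaMap_tmul (c : Q.coinvariants ρ) (h : H) : sigmaMap Q act ρ (c ⊗ₜ h) = act (c ⊗ₜ h) :=
  rfl

variable (hM : Q.IsHopfModule act ρ)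

def sigmaInv : M →ₗ[k] Q.coinvariants ρ ⊗[k] H :=
  map (codRestrict _ (Q.coinvProjection act ρ) (Q.coinvProjection_mem hM)) id ∘ₗ ρ

include hM

lemma map_subtype_sigmaInv (m : M) :
    map (Q.coinvariants ρ).subtype id (sigmaInv hM m) = Q.coinvPart act ρ m := by
  rw [sigmaInv, comp_apply, map_map, subtype_comp_codRestrict, comp_id,
    HopfQuasigroup.coinvPart_apply]

lemma sigmaMap_sigmaInv (m : M) : sigmaMap Q act ρ (sigmaInv hM m) = m := by
  rw [sigmaMap, comp_apply, map_subtype_sigmaInv, Q.act_coinvPart hM]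

lemma sigmaInv_sigmaMap (x : Q.coinvariants ρ ⊗[k] H) : sigmaInv hM (sigmaMap Q act ρ x) = x := by
  induction x using TensorProduct.induction_on with
  | zero => simp
  | tmul c h =>
    rw [sigmaMap_tmul, sigmaInv, comp_apply]
    refine Q.map_coaction_act_of_mem hM c.2 _ c (fun h => ?_) h
    exact Subtype.ext (Q.coinvProjection_act_of_mem hM c.2 h)
  | add x y hx hy => simp [hx, hy]

lemma coaction_sigmaMap (x : Q.coinvariants ρ ⊗[k] H) :
    ρ (sigmaMap Q act ρ x) = map (sigmaMap Q act ρ) id (Q.freeCoact _ x) := by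
  induction x using TensorProduct.induction_on with
  | zero => simp
  | tmul c h =>
    rw [sigmaMap_tmul, Q.coaction_act_of_mem hM c.2, Q.freeCoact_tmul, map_map, comp_id]
    rfl
  | add x y hx hy => simp [hx, hy]

lemma sigmaMap_inducedAct (x : Q.coinvariants ρ ⊗[k] H) (h : H) :
    sigmaMap Q act ρ (Q.inducedAct (Q.freeAct _) (Q.freeCoact _) (x ⊗ₜ h)) =
      Q.inducedAct act ρ (sigmaMap Q act ρ x ⊗ₜ h) := by
  induction x using TensorProduct.induction_on with
  | zero => simp
  | tmul c g =>
    rw [Q.inducedAct_freeAct_freeCoact, sigmaMap_tmul, sigmaMap_tmul,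
      Q.inducedAct_act_of_mem hM c.2]
  | add x y hx hy => simp [add_tmul, hx, hy]

end Sigma

/-- For a right Hopf module `M` over a Hopf quasigroup, the map
`σ : M^{coH} ⊗ H → M`, `m ⊗ h ↦ m·h`, is bijective with inverse
`m ↦ (m₍₀₎·Sm₍₁₎) ⊗ m₍₂₎` (well-defined since `m₍₀₎·Sm₍₁₎ ∈ M^{coH}`); moreover `σ` is
right `H`-colinear and intertwines the induced actions. -/
theorem stmt13 {k : Type*} [Field k] {H : Type*} [AddCommGroup H] [Module k H]
    (Q : HopfQuasigroup k H) {M : Type*} [AddCommGroup M] [Module k M]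
    (act : M ⊗[k] H →ₗ[k] M) (ρ : M →ₗ[k] M ⊗[k] H)
    (hM : Q.IsHopfModule act ρ) :
    (∀ m : M, act (TensorProduct.map LinearMap.id Q.S (ρ m)) ∈ Q.coinvariants ρ) ∧
    Function.Bijective ⇑(sigmaMap Q act ρ) ∧
    (∃ σinv : M →ₗ[k] ↥(Q.coinvariants ρ) ⊗[k] H,
      (∀ m : M, TensorProduct.map (Q.coinvariants ρ).subtype LinearMap.id (σinv m) =
          Q.coinvPart act ρ m) ∧
      (∀ m : M, sigmaMap Q act ρ (σinv m) = m) ∧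
      (∀ x : ↥(Q.coinvariants ρ) ⊗[k] H, σinv (sigmaMap Q act ρ x) = x)) ∧
    (∀ x : ↥(Q.coinvariants ρ) ⊗[k] H,
      ρ (sigmaMap Q act ρ x) =
        TensorProduct.map (sigmaMap Q act ρ) LinearMap.id
          (Q.freeCoact ↥(Q.coinvariants ρ) x)) ∧
    (∀ (x : ↥(Q.coinvariants ρ) ⊗[k] H) (h : H),
      sigmaMap Q act ρ
          (Q.inducedAct (Q.freeAct ↥(Q.coinvariants ρ)) (Q.freeCoact ↥(Q.coinvariants ρ))
            (x ⊗ₜ[k] h)) =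
        Q.inducedAct act ρ (sigmaMap Q act ρ x ⊗ₜ[k] h)) :=
  ⟨Q.coinvProjection_mem hM,
    ⟨Function.LeftInverse.injective (sigmaInv_sigmaMap hM),
      Function.LeftInverse.surjective (sigmaMap_sigmaInv hM)⟩,
    ⟨sigmaInv hM, map_subtype_sigmaInv hM, sigmaMap_sigmaInv hM, sigmaInv_sigmaMap hM⟩,
    coaction_sigmaMap hM, sigmaMap_inducedAct hM⟩
end
end

section
/- Let H be a Hopf coquasigroup and M a right H-Hopf module with action (m,h) ↦ m·h and coaction ρ. Then for all m ∈ M and h ∈ H: (m·h)₍₀₎·S((m·h)₍₁₎) = (m₍₀₎·Sm₍₁₎)ε(h). -/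
open TensorProduct

noncomputable section

/-! Since `ρ(m·h) = m₍₀₎·h₍₁₎ ⊗ m₍₁₎h₍₂₎` and the action is associative, the left-hand side is
`m₍₀₎ · h₍₁₎ S(m₍₁₎h₍₂₎)`. Applying `ε ⊗ id` to the third coantipode axiom gives
`h₍₁₎ S h₍₂₎ = ε(h) 1`, so it remains to see that `S` is anti-multiplicative. By the first
coantipode axiom `1 ⊗ g = S g₍₁₎ g₍₂₎₍₁₎ ⊗ g₍₂₎₍₂₎`; as `Δ` is multiplicative,
`1 ⊗ gh = (1 ⊗ g)(1 ⊗ h) = S h₍₁₎ S g₍₁₎ (g₍₂₎h₍₂₎)₍₁₎ ⊗ (g₍₂₎h₍₂₎)₍₂₎`,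
and applying `a ⊗ b ↦ a S b` to both sides yields `S(gh) = S h S g`. -/

@[simp]
lemma tmul2_tmul {k : Type*} [Field k] {H : Type*} [AddCommGroup H] [Module k H]
    (mul : H →ₗ[k] H →ₗ[k] H) (a b c d : H) :
    tmul2 k H mul (a ⊗ₜ[k] b) (c ⊗ₜ[k] d) = mul a c ⊗ₜ[k] mul b d := by
  simp [tmul2]

lemma lid_map_id {k : Type*} [Field k] {X Y : Type*} [AddCommGroup X] [Module k X]
    [AddCommGroup Y] [Module k Y] (f : X →ₗ[k] Y) (z : k ⊗[k] X) :
    TensorProduct.lid k Y (map LinearMap.id f z) = f (TensorProduct.lid k X z) := by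
  induction z using TensorProduct.induction_on with
  | zero => simp
  | add z₁ z₂ hz₁ hz₂ => simp only [map_add, hz₁, hz₂]
  | tmul c x => simp

namespace BialgQ

variable {k : Type*} [Field k] {H : Type*} [AddCommGroup H] [Module k H] (D : BialgQ k H)

lemma rGalois_tmul (a b : H) :
    D.rGalois (a ⊗ₜ[k] b) = map (D.mul a) LinearMap.id (D.comul b) := by
  simp only [rGalois, LinearMap.comp_apply, map_tmul, LinearEquiv.coe_coe, LinearMap.id_coe,
    id_eq]
  induction D.comul b using TensorProduct.induction_on with
  | zero => simp
  | add x y hx hy => simp only [tmul_add, map_add, hx, hy]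
  | tmul c d => simp [mulMap]

lemma tmul2_one_tmul (g : H) (z : H ⊗[k] H) :
    tmul2 k H D.mul (D.one ⊗ₜ[k] g) z = map LinearMap.id (D.mul g) z := by
  induction z using TensorProduct.induction_on with
  | zero => simp
  | add x y hx hy => simp only [map_add, hx, hy]
  | tmul c d => simp [D.one_mul]

lemma lid_map_counit_assoc_map_comul {N : Type*} [AddCommGroup N] [Module k N]
    (w : H ⊗[k] N) :
    TensorProduct.lid k (H ⊗[k] N)
      (map D.counit LinearMap.id (TensorProduct.assoc k H H N (map D.comul LinearMap.id w))) =
      w := by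
  induction w using TensorProduct.induction_on with
  | zero => simp
  | add w₁ w₂ hw₁ hw₂ => simp only [map_add, hw₁, hw₂]
  | tmul a n =>
    conv_rhs => rw [← D.counit_comul a]
    simp only [map_tmul, LinearMap.id_coe, id_eq]
    induction D.comul a using TensorProduct.induction_on with
    | zero => simp
    | add y₁ y₂ hy₁ hy₂ => simp only [map_add, add_tmul, hy₁, hy₂]
    | tmul b c => simp [smul_tmul']

end BialgQ

namespace HopfCoquasigroup

variable {k : Type*} [Field k] {H : Type*} [AddCommGroup H] [Module k H]
  (Q : HopfCoquasigroup k H)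

lemma lift_mul_map_antipode_comul (h : H) :
    lift Q.mul (map LinearMap.id Q.S (Q.comul h)) = Q.counit h • Q.one := by
  have h₃ := congrArg (fun z => TensorProduct.lid k H (map Q.counit LinearMap.id z))
    (Q.coantipode₃ h)
  have swap : ∀ z : H ⊗[k] (H ⊗[k] H), map Q.counit LinearMap.id
      (map LinearMap.id (lift Q.mul ∘ₗ map LinearMap.id Q.S) z) =
      map LinearMap.id (lift Q.mul ∘ₗ map LinearMap.id Q.S) (map Q.counit LinearMap.id z) := by
    intro z
    rw [← LinearMap.comp_apply, ← LinearMap.comp_apply, ← map_comp, ← map_comp]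
    rfl
  rw [swap, lid_map_id, Q.lid_map_counit_assoc_map_comul] at h₃
  simpa [Q.counit_one] using h₃

lemma lift_mul_map_antipode_map_mul_left (a : H) (z : H ⊗[k] H) :
    lift Q.mul (map LinearMap.id Q.S (map (Q.mul a) LinearMap.id z)) =
      Q.mul a (lift Q.mul (map LinearMap.id Q.S z)) := by
  induction z using TensorProduct.induction_on with
  | zero => simp
  | add z₁ z₂ hz₁ hz₂ => simp only [map_add, hz₁, hz₂]
  | tmul b c => simp [Q.mul_assoc]

lemma lift_mul_map_antipode_rGalois (x : H ⊗[k] H) :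
    lift Q.mul (map LinearMap.id Q.S (Q.rGalois x)) =
      TensorProduct.rid k H (map LinearMap.id Q.counit x) := by
  induction x using TensorProduct.induction_on with
  | zero => simp
  | add x₁ x₂ hx₁ hx₂ => simp only [map_add, hx₁, hx₂]
  | tmul a b =>
    rw [BialgQ.rGalois_tmul, lift_mul_map_antipode_map_mul_left, lift_mul_map_antipode_comul]
    simp [Q.mul_one]

lemma tmul2_map_mul_left (a : H) (x y : H ⊗[k] H) :
    tmul2 k H Q.mul (map (Q.mul a) LinearMap.id x) y =
      map (Q.mul a) LinearMap.id (tmul2 k H Q.mul x y) := by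
  induction x using TensorProduct.induction_on with
  | zero => simp
  | add x₁ x₂ hx₁ hx₂ => simp only [map_add, LinearMap.add_apply, hx₁, hx₂]
  | tmul b c =>
    induction y using TensorProduct.induction_on with
    | zero => simp
    | add y₁ y₂ hy₁ hy₂ => simp only [map_add, hy₁, hy₂]
    | tmul d e => simp [Q.mul_assoc]

lemma tmul2_rGalois_comul (x : H ⊗[k] H) (d : H) :
    tmul2 k H Q.mul (Q.rGalois x) (Q.comul d) =
      Q.rGalois (map LinearMap.id (Q.mul.flip d) x) := by
  induction x using TensorProduct.induction_on with
  | zero => simp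
  | add x₁ x₂ hx₁ hx₂ => simp only [map_add, LinearMap.add_apply, hx₁, hx₂]
  | tmul a b => simp [BialgQ.rGalois_tmul, tmul2_map_mul_left, Q.comul_mul]

lemma rGalois_map_antipode_comul (g : H) :
    Q.rGalois (map Q.S LinearMap.id (Q.comul g)) = Q.one ⊗ₜ[k] g := by
  rw [← Q.coantipode₁ g]
  induction Q.comul g using TensorProduct.induction_on with
  | zero => simp
  | add x₁ x₂ hx₁ hx₂ => simp only [map_add, hx₁, hx₂]
  | tmul a b =>
    simp only [map_tmul, BialgQ.rGalois_tmul, LinearMap.id_coe, id_eq]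
    induction Q.comul b using TensorProduct.induction_on with
    | zero => simp
    | add y₁ y₂ hy₁ hy₂ => simp only [map_add, tmul_add, hy₁, hy₂]
    | tmul c d => simp

lemma map_id_mul_comul (g d : H) :
    map LinearMap.id (Q.mul g) (Q.comul d) = Q.rGalois (map Q.S (Q.mul.flip d) (Q.comul g)) := by
  rw [← BialgQ.tmul2_one_tmul, ← rGalois_map_antipode_comul, tmul2_rGalois_comul,
    ← LinearMap.comp_apply (map _ _), ← map_comp]
  rfl

lemma rid_map_counit_map_antipode_mul_flip (d : H) (y : H ⊗[k] H) :
    TensorProduct.rid k H (map LinearMap.id Q.counit (map Q.S (Q.mul.flip d) y)) =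
      Q.counit d • Q.S (TensorProduct.rid k H (map LinearMap.id Q.counit y)) := by
  induction y using TensorProduct.induction_on with
  | zero => simp
  | add y₁ y₂ hy₁ hy₂ => simp only [map_add, hy₁, hy₂, smul_add]
  | tmul a b => simp [Q.counit_mul, smul_smul, mul_comm]

theorem antipode_mul (g h : H) : Q.S (Q.mul g h) = Q.mul (Q.S h) (Q.S g) := by
  set σ := lift Q.mul ∘ₗ map LinearMap.id Q.S
  have key : ∀ x, σ (map LinearMap.id (Q.mul g) (Q.rGalois (map Q.S LinearMap.id x))) =
      Q.mul (Q.S (TensorProduct.rid k H (map LinearMap.id Q.counit x))) (Q.S g) := by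
    intro x
    induction x using TensorProduct.induction_on with
    | zero => simp
    | add x₁ x₂ hx₁ hx₂ => simp only [map_add, hx₁, hx₂, LinearMap.add_apply]
    | tmul c d =>
      have swap : map LinearMap.id (Q.mul g) (map (Q.mul (Q.S c)) LinearMap.id (Q.comul d)) =
          map (Q.mul (Q.S c)) LinearMap.id (map LinearMap.id (Q.mul g) (Q.comul d)) := by
        rw [← LinearMap.comp_apply, ← LinearMap.comp_apply (map _ _), ← map_comp, ← map_comp]
        rfl
      simp only [map_tmul, LinearMap.id_coe, id_eq, BialgQ.rGalois_tmul, swap, σ,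
        LinearMap.comp_apply]
      rw [lift_mul_map_antipode_map_mul_left, map_id_mul_comul, lift_mul_map_antipode_rGalois,
        rid_map_counit_map_antipode_mul_flip, Q.comul_counit]
      simp
  calc Q.S (Q.mul g h) = σ (Q.one ⊗ₜ[k] Q.mul g h) := by simp [σ, Q.one_mul]
    _ = σ (map LinearMap.id (Q.mul g) (Q.rGalois (map Q.S LinearMap.id (Q.comul h)))) := by
      rw [rGalois_map_antipode_comul]; simp
    _ = Q.mul (Q.S h) (Q.S g) := by rw [key, Q.comul_counit]

lemma act_map_antipode_diag {M : Type*} [AddCommGroup M] [Module k M] (act : M ⊗[k] H →ₗ[k] M)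
    (act_act : ∀ m g h, act (act (m ⊗ₜ[k] g) ⊗ₜ[k] h) = act (m ⊗ₜ[k] Q.mul g h))
    (x : M ⊗[k] H) (y : H ⊗[k] H) :
    act (map LinearMap.id Q.S
        (map act (lift Q.mul) (TensorProduct.tensorTensorTensorComm k M H H H (x ⊗ₜ[k] y)))) =
      act (map LinearMap.id (Q.mul (lift Q.mul (map LinearMap.id Q.S y)) ∘ₗ Q.S) x) := by
  induction x using TensorProduct.induction_on with
  | zero => simp
  | add x₁ x₂ hx₁ hx₂ => simp only [map_add, add_tmul, hx₁, hx₂]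
  | tmul m a =>
    induction y using TensorProduct.induction_on with
    | zero => simp
    | add y₁ y₂ hy₁ hy₂ =>
      simp only [map_add, tmul_add, hy₁, hy₂, LinearMap.add_comp, map_add_right,
        LinearMap.add_apply]
    | tmul b c => simp [act_act, Q.antipode_mul, Q.mul_assoc]

end HopfCoquasigroup

/-- For a right Hopf module `M` over a Hopf coquasigroup,
`(m·h)₍₀₎ · S((m·h)₍₁₎) = (m₍₀₎ · S m₍₁₎) ε(h)`. -/
theorem stmt18 {k : Type*} [Field k] {H : Type*} [AddCommGroup H] [Module k H]
    (Q : HopfCoquasigroup k H) {M : Type*} [AddCommGroup M] [Module k M]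
    (act : M ⊗[k] H →ₗ[k] M) (ρ : M →ₗ[k] M ⊗[k] H)
    (hM : Q.IsHopfModule act ρ) :
    ∀ (m : M) (h : H),
      act (TensorProduct.map LinearMap.id Q.S (ρ (act (m ⊗ₜ[k] h)))) =
        Q.counit h • act (TensorProduct.map LinearMap.id Q.S (ρ m)) := by
  obtain ⟨-, act_act, -, -, -, coact_act⟩ := hM
  intro m h
  have mul_counit_smul_one : Q.mul (Q.counit h • Q.one) = Q.counit h • LinearMap.id := by
    ext g; simp [Q.one_mul]
  rw [coact_act, Q.act_map_antipode_diag act act_act, Q.lift_mul_map_antipode_comul,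
    mul_counit_smul_one, LinearMap.smul_comp, LinearMap.id_comp, map_smul_right,
    LinearMap.smul_apply, map_smul]
end
end
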